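/- arXiv:0912.1764 — 2 statements merged into one kernel-verified Lean document; each statement's English description precedes it below -/
import Mathlib

section
/- Let L be a graded subalgebra of a G-graded Lie algebra Q = ⊕_{σ∈G} Q_σ and let q_τ ∈ Q_τ be a homogeneous element. Then (L : q_τ) := {x ∈ L : [x, _L(q_τ)] ⊆ L} is a graded ideal of L. -/
/-- The set of iterated adjoint actions of elements of the subalgebra `L` on `q`,
i.e. `q` together with all elements `ad x₁ ⋯ ad xₙ (q)` with `x₁, …, xₙ ∈ L`. -/
inductive AdOrbit {Φ : Type*} [CommRing Φ] {Q : Type*} [LieRing Q] [LieAlgebra Φ Q]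
    (L : LieSubalgebra Φ Q) (q : Q) : Q → Prop
  | base : AdOrbit L q q
  | step (x : Q) (hx : x ∈ L) {y : Q} (hy : AdOrbit L q y) : AdOrbit L q ⁅x, y⁆

/-- `_L(q)`: the `Φ`-linear span in `Q` of `q` together with all elements
`ad x₁ ⋯ ad xₙ (q)` with `x₁, …, xₙ ∈ L`. -/
def lSpan (Φ : Type*) [CommRing Φ] {Q : Type*} [LieRing Q] [LieAlgebra Φ Q]
    (L : LieSubalgebra Φ Q) (q : Q) : Submodule Φ Q :=
  Submodule.span Φ {y | AdOrbit L q y}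

/-- The set `(L : q) = {x ∈ L | ⁅x, _L(q)⁆ ⊆ L}`. -/
def memColon {Φ : Type*} [CommRing Φ] {Q : Type*} [LieRing Q] [LieAlgebra Φ Q]
    (L : LieSubalgebra Φ Q) (q : Q) (x : Q) : Prop :=
  x ∈ L ∧ ∀ y ∈ lSpan Φ L q, ⁅x, y⁆ ∈ L

section Aux

open DirectSum

variable {Φ : Type*} [CommRing Φ] {G : Type*} [CommGroup G] [DecidableEq G]
  {Q : Type*} [LieRing Q] [LieAlgebra Φ Q]

lemma my_sum_lie {ι : Type*} (s : Finset ι) (f : ι → Q) (z : Q) :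
    ⁅∑ i ∈ s, f i, z⁆ = ∑ i ∈ s, ⁅f i, z⁆ :=
  map_sum (AddMonoidHom.mk' (fun x => ⁅x, z⁆) fun a b => add_lie a b z) f s

lemma my_lie_sum {ι : Type*} (s : Finset ι) (f : ι → Q) (z : Q) :
    ⁅z, ∑ i ∈ s, f i⁆ = ∑ i ∈ s, ⁅z, f i⁆ :=
  map_sum (AddMonoidHom.mk' (fun x => ⁅z, x⁆) fun a b => lie_add z a b) f s

lemma lie_mem_lSpan (L : LieSubalgebra Φ Q) (q : Q) {x y : Q} (hx : x ∈ L)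
    (hy : y ∈ lSpan Φ L q) : ⁅x, y⁆ ∈ lSpan Φ L q := by
  induction hy using Submodule.span_induction with
  | mem z hz => exact Submodule.subset_span (AdOrbit.step x hx hz)
  | zero => simp
  | add a b _ _ ha hb => rw [lie_add]; exact Submodule.add_mem _ ha hb
  | smul c a _ ha => rw [lie_smul]; exact Submodule.smul_mem _ _ ha

lemma decompose_homog (𝒜 : G → Submodule Φ Q) [DirectSum.Decomposition 𝒜]
    {δ : G} (γ : G) {w : Q} (hw : w ∈ 𝒜 δ) :
    (DirectSum.decompose 𝒜 w γ : Q) = if γ = δ then w else 0 := by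
  split
  · next h => subst h; exact DirectSum.decompose_of_mem_same 𝒜 hw
  · next h => exact DirectSum.decompose_of_mem_ne 𝒜 hw (Ne.symm h)

lemma decompose_coe_sum (𝒜 : G → Submodule Φ Q) [DirectSum.Decomposition 𝒜]
    {ι : Type*} (s : Finset ι) (f : ι → Q) (γ : G) :
    (DirectSum.decompose 𝒜 (∑ i ∈ s, f i) γ : Q)
      = ∑ i ∈ s, (DirectSum.decompose 𝒜 (f i) γ : Q) := by
  rw [DirectSum.decompose_sum]
  rw [DFinsupp.finset_sum_apply]
  push_cast
  rfl

lemma adOrbit_decompose_mem (𝒜 : G → Submodule Φ Q) [DirectSum.Decomposition 𝒜]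
    (hbracket : ∀ (σ τ : G) (x y : Q), x ∈ 𝒜 σ → y ∈ 𝒜 τ → ⁅x, y⁆ ∈ 𝒜 (σ * τ))
    (L : LieSubalgebra Φ Q)
    (hLgr : ∀ x ∈ L, ∀ σ : G, (DirectSum.decompose 𝒜 x σ : Q) ∈ L)
    {τ : G} {q : Q} (hq : q ∈ 𝒜 τ) {y : Q} (hy : AdOrbit L q y) :
    ∀ γ : G, (DirectSum.decompose 𝒜 y γ : Q) ∈ lSpan Φ L q := by
  classical
  induction hy with
  | base =>
    intro γ
    rw [decompose_homog 𝒜 γ hq]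
    split
    · exact Submodule.subset_span AdOrbit.base
    · exact Submodule.zero_mem _
  | step x hx hz IH =>
    intro γ
    rename_i z
    conv_rhs => rw [← DirectSum.sum_support_decompose 𝒜 x, my_sum_lie,
      decompose_coe_sum]
    refine Submodule.sum_mem _ fun σ _ => ?_
    conv_rhs => rw [← DirectSum.sum_support_decompose 𝒜 z, my_lie_sum,
      decompose_coe_sum]
    refine Submodule.sum_mem _ fun ρ _ => ?_
    rw [decompose_homog 𝒜 γ (hbracket σ ρ _ _ (DirectSum.decompose 𝒜 x σ).2
      (DirectSum.decompose 𝒜 z ρ).2)]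
    split
    · exact lie_mem_lSpan L q (hLgr x hx σ) (IH ρ)
    · exact Submodule.zero_mem _

lemma lSpan_decompose_mem (𝒜 : G → Submodule Φ Q) [DirectSum.Decomposition 𝒜]
    (hbracket : ∀ (σ τ : G) (x y : Q), x ∈ 𝒜 σ → y ∈ 𝒜 τ → ⁅x, y⁆ ∈ 𝒜 (σ * τ))
    (L : LieSubalgebra Φ Q)
    (hLgr : ∀ x ∈ L, ∀ σ : G, (DirectSum.decompose 𝒜 x σ : Q) ∈ L)
    {τ : G} {q : Q} (hq : q ∈ 𝒜 τ) {y : Q} (hy : y ∈ lSpan Φ L q) (γ : G) :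
    (DirectSum.decompose 𝒜 y γ : Q) ∈ lSpan Φ L q := by
  induction hy using Submodule.span_induction with
  | mem z hz => exact adOrbit_decompose_mem 𝒜 hbracket L hLgr hq hz γ
  | zero => simp
  | add a b _ _ ha hb =>
    rw [DirectSum.decompose_add]
    exact Submodule.add_mem _ ha hb
  | smul c a _ ha =>
    rw [DirectSum.decompose_smul]
    exact Submodule.smul_mem _ _ ha

lemma bracket_component (𝒜 : G → Submodule Φ Q) [DirectSum.Decomposition 𝒜]
    (hbracket : ∀ (σ τ : G) (x y : Q), x ∈ 𝒜 σ → y ∈ 𝒜 τ → ⁅x, y⁆ ∈ 𝒜 (σ * τ))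
    {a y : Q} {ρ : G} (σ : G) (hy : y ∈ 𝒜 ρ) :
    ⁅(DirectSum.decompose 𝒜 a σ : Q), y⁆
      = (DirectSum.decompose 𝒜 ⁅a, y⁆ (σ * ρ) : Q) := by
  classical
  conv_rhs => rw [← DirectSum.sum_support_decompose 𝒜 a, my_sum_lie,
    decompose_coe_sum]
  rw [Finset.sum_eq_single σ]
  · rw [decompose_homog 𝒜 _ (hbracket σ ρ _ _ (DirectSum.decompose 𝒜 a σ).2 hy),
      if_pos rfl]
  · intro δ _ hδ
    rw [decompose_homog 𝒜 _ (hbracket δ ρ _ _ (DirectSum.decompose 𝒜 a δ).2 hy),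
      if_neg]
    exact fun h => hδ (mul_right_cancel h.symm)
  · intro hσ
    rw [DFinsupp.notMem_support_iff.mp hσ]
    simp

end Aux

/-- Let `L` be a graded subalgebra of a `G`-graded Lie algebra
`Q = ⊕_{σ∈G} Q_σ` and let `q_τ ∈ Q_τ` be homogeneous.  Then
`(L : q_τ) = {x ∈ L | ⁅x, _L(q_τ)⁆ ⊆ L}` is a graded ideal of `L`: it is a
`Φ`-submodule of `L`, closed under brackets with elements of `L`, and contains
the homogeneous components of each of its elements. -/
theorem colon_is_graded_ideal
    {Φ : Type*} [CommRing Φ] {G : Type*} [CommGroup G] [DecidableEq G]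
    {Q : Type*} [LieRing Q] [LieAlgebra Φ Q]
    (𝒜 : G → Submodule Φ Q) [DirectSum.Decomposition 𝒜]
    (hbracket : ∀ (σ τ : G) (x y : Q), x ∈ 𝒜 σ → y ∈ 𝒜 τ → ⁅x, y⁆ ∈ 𝒜 (σ * τ))
    (L : LieSubalgebra Φ Q)
    (hLgr : ∀ x ∈ L, ∀ σ : G, (DirectSum.decompose 𝒜 x σ : Q) ∈ L)
    (τ : G) (q : Q) (hq : q ∈ 𝒜 τ) :
    memColon L q 0 ∧
    (∀ a b : Q, memColon L q a → memColon L q b → memColon L q (a + b)) ∧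
    (∀ (c : Φ) (a : Q), memColon L q a → memColon L q (c • a)) ∧
    (∀ x ∈ L, ∀ a : Q, memColon L q a → memColon L q ⁅x, a⁆) ∧
    (∀ a : Q, memColon L q a → ∀ σ : G,
      memColon L q (DirectSum.decompose 𝒜 a σ : Q)) := by
  classical
  refine ⟨⟨L.zero_mem, fun y _ => by simp [L.zero_mem]⟩, ?_, ?_, ?_, ?_⟩
  · rintro a b ⟨haL, ha⟩ ⟨hbL, hb⟩
    exact ⟨L.add_mem haL hbL, fun y hy => by
      rw [add_lie]; exact L.add_mem (ha y hy) (hb y hy)⟩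
  · rintro c a ⟨haL, ha⟩
    exact ⟨L.smul_mem c haL, fun y hy => by
      rw [smul_lie]; exact L.smul_mem c (ha y hy)⟩
  · rintro x hx a ⟨haL, ha⟩
    refine ⟨L.lie_mem hx haL, fun y hy => ?_⟩
    rw [lie_lie]
    exact L.sub_mem (L.lie_mem hx (ha y hy))
      (ha _ (lie_mem_lSpan L q hx hy))
  · rintro a ⟨haL, ha⟩ σ
    refine ⟨hLgr a haL σ, fun y hy => ?_⟩
    conv_rhs => rw [← DirectSum.sum_support_decompose 𝒜 y, my_lie_sum]
    refine Submodule.sum_mem (LieSubalgebra.toSubmodule L) fun ρ _ => ?_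
    rw [bracket_component 𝒜 hbracket σ (DirectSum.decompose 𝒜 y ρ).2]
    exact hLgr _ (ha _ (lSpan_decompose_mem 𝒜 hbracket L hLgr hq hy ρ)) _
end

section
/- Let Q = ⊕_{σ∈G} Q_σ be a graded algebra of quotients of a graded semiprime G-graded Lie algebra L. Then, given a nonzero homogeneous element p_σ ∈ Q_σ and homogeneous elements q_{τ_1} ∈ Q_{τ_1}, …, q_{τ_n} ∈ Q_{τ_n} (n ∈ ℕ), there exist α ∈ G and x_α ∈ L_α such that [x_α, p_σ] ≠ 0 and [x_α, _L(q_{τ_i})] ⊆ L for every i = 1, …, n. -/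
/-!
The denominator ideals `D(q) = {x ∈ L | ⁅x, _L(q)⁆ ⊆ L}` of homogeneous `q` are graded ideals
of `L`, and the quotient property says that each of them, like `L` itself, moves every nonzero
homogeneous element of `Q`. This separation property passes to the intersection of two graded
ideals `I` and `J`: if `I ∩ J` killed a nonzero homogeneous `u`, choose `x ∈ L` with
`0 ≠ ⁅x, u⁆ ∈ L`. By the Jacobi identity `⁅x, u⁆` lies in the annihilator `N` of `I ∩ J` in `L`,
so `N ≠ 0`; moving homogeneous elements first by `I` and then by `J` yields a nonzero element of
`I ∩ J ∩ N`, while graded semiprimeness forces `I ∩ J ∩ N = 0`. Hence `L ∩ D(q₁) ∩ ⋯ ∩ D(qₙ)`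
moves `p`, and so does one of the homogeneous components of any element of it that moves `p`.
-/

open DirectSum

section LieColon

variable {Φ Q : Type*} [CommRing Φ] [LieRing Q] [LieAlgebra Φ Q] (L : LieSubalgebra Φ Q)

def IsLieStable (W : Submodule Φ Q) : Prop :=
  ∀ x ∈ L, ∀ y ∈ W, ⁅x, y⁆ ∈ W

lemma isLieStable_self : IsLieStable L L.toSubmodule :=
  fun _ hx _ hy => L.lie_mem hx hy

lemma isLieStable_bot : IsLieStable L ⊥ := by
  intro x _ y hy
  rw [(Submodule.mem_bot Φ).1 hy, lie_zero]
  exact Submodule.zero_mem _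

variable {L} in
lemma IsLieStable.inf {V W : Submodule Φ Q} (hV : IsLieStable L V) (hW : IsLieStable L W) :
    IsLieStable L (V ⊓ W) :=
  fun x hx _ hy => ⟨hV x hx _ hy.1, hW x hx _ hy.2⟩

lemma mem_lSpan_self (q : Q) : q ∈ lSpan Φ L q :=
  Submodule.subset_span AdOrbit.base

lemma isLieStable_lSpan (q : Q) : IsLieStable L (lSpan Φ L q) := by
  intro x hx y hy
  induction hy using Submodule.span_induction with
  | mem z hz => exact Submodule.subset_span (AdOrbit.step x hx hz)
  | zero => rw [lie_zero]; exact Submodule.zero_mem _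
  | add a b _ _ ha hb => rw [lie_add]; exact Submodule.add_mem _ ha hb
  | smul c a _ ha => rw [lie_smul]; exact Submodule.smul_mem _ _ ha

/-- Both the denominator ideal of `q` (`S = L`, `W = _L(q)`) and the annihilator in `L` of an
ideal `K` (`S = 0`, `W = K`) are of this form. -/
def lieColon (S W : Submodule Φ Q) : Submodule Φ Q where
  carrier := {x | x ∈ L ∧ ∀ w ∈ W, ⁅x, w⁆ ∈ S}
  add_mem' ha hb := ⟨L.add_mem ha.1 hb.1, fun w hw => by
    rw [add_lie]; exact S.add_mem (ha.2 w hw) (hb.2 w hw)⟩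
  zero_mem' := ⟨L.zero_mem, fun w _ => by rw [zero_lie]; exact S.zero_mem⟩
  smul_mem' c x hx := ⟨L.smul_mem c hx.1, fun w hw => by
    rw [smul_lie]; exact S.smul_mem c (hx.2 w hw)⟩

variable {L} {S W : Submodule Φ Q}

@[simp]
lemma mem_lieColon {x : Q} : x ∈ lieColon L S W ↔ x ∈ L ∧ ∀ w ∈ W, ⁅x, w⁆ ∈ S :=
  Iff.rfl

lemma lieColon_le : lieColon L S W ≤ L.toSubmodule :=
  fun _ hx => hx.1

lemma IsLieStable.lieColon (hS : IsLieStable L S) (hW : IsLieStable L W) :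
    IsLieStable L (lieColon L S W) := by
  intro x hx a ha
  refine ⟨L.lie_mem hx ha.1, fun w hw => ?_⟩
  rw [lie_lie]
  exact S.sub_mem (hS x hx _ (ha.2 w hw)) (ha.2 _ (hW x hx w hw))

lemma lieColon_bot_ne_bot {K : Submodule Φ Q} (hK : IsLieStable L K) {u x : Q}
    (hKu : ∀ w ∈ K, ⁅w, u⁆ = 0) (hx : x ∈ L) (hxu : ⁅x, u⁆ ∈ L) (hxu0 : ⁅x, u⁆ ≠ 0) :
    lieColon L ⊥ K ≠ ⊥ := by
  refine (Submodule.ne_bot_iff _).2 ⟨⁅x, u⁆, ⟨hxu, fun w hw => ?_⟩, hxu0⟩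
  have hwx : ⁅w, x⁆ ∈ K := by
    rw [← lie_skew]; exact K.neg_mem (hK x hx w hw)
  rw [Submodule.mem_bot, ← lie_skew, leibniz_lie, hKu _ hwx, hKu w hw, lie_zero, zero_add,
    neg_zero]

end LieColon

section Graded

variable {Φ Q G : Type*} [CommRing Φ] [LieRing Q] [LieAlgebra Φ Q]

def IsLieGrading [Mul G] (𝒜 : G → Submodule Φ Q) : Prop :=
  ∀ (σ τ : G) (x y : Q), x ∈ 𝒜 σ → y ∈ 𝒜 τ → ⁅x, y⁆ ∈ 𝒜 (σ * τ)

variable [DecidableEq G] {𝒜 : G → Submodule Φ Q} [Decomposition 𝒜]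

lemma Submodule.IsHomogeneous.exists_homogeneous_ne_zero {A : Submodule Φ Q}
    (hA : A.IsHomogeneous 𝒜) (hA0 : A ≠ ⊥) : ∃ (g : G) (a : Q), a ∈ 𝒜 g ∧ a ∈ A ∧ a ≠ 0 := by
  classical
  obtain ⟨a, ha, ha0⟩ := (Submodule.ne_bot_iff A).1 hA0
  rw [← sum_support_decompose 𝒜 a] at ha0
  obtain ⟨g, -, hg⟩ := Finset.exists_ne_zero_of_sum_ne_zero ha0
  exact ⟨g, _, (decompose 𝒜 a g).2, hA g ha, hg⟩

lemma exists_homogeneous_lie_ne_zero {I : Submodule Φ Q} (hI : I.IsHomogeneous 𝒜) {x p : Q}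
    (hx : x ∈ I) (hxp : ⁅x, p⁆ ≠ 0) : ∃ (α : G) (y : Q), y ∈ 𝒜 α ∧ y ∈ I ∧ ⁅y, p⁆ ≠ 0 := by
  classical
  rw [← sum_support_decompose 𝒜 x, sum_lie] at hxp
  obtain ⟨α, -, hα⟩ := Finset.exists_ne_zero_of_sum_ne_zero hxp
  exact ⟨α, _, (decompose 𝒜 x α).2, hI α hx, hα⟩

lemma Submodule.isHomogeneous_bot : (⊥ : Submodule Φ Q).IsHomogeneous 𝒜 := by
  intro g m hm
  rw [(Submodule.mem_bot Φ).1 hm, decompose_zero, DirectSum.zero_apply, ZeroMemClass.coe_zero]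
  exact Submodule.zero_mem _

namespace IsLieGrading

variable [CommGroup G]

lemma decompose_lie_of_mem_left (h𝒜 : IsLieGrading 𝒜) {x : Q} {β : G} (hx : x ∈ 𝒜 β)
    (g : G) (a : Q) : (decompose 𝒜 ⁅x, a⁆ (β * g) : Q) = ⁅x, (decompose 𝒜 a g : Q)⁆ := by
  induction a using DirectSum.Decomposition.inductionOn 𝒜 with
  | zero => simp
  | @homogeneous t m =>
    by_cases h : t = g
    · subst h
      rw [decompose_of_mem_same 𝒜 (h𝒜 β t x m hx m.2), decompose_of_mem_same 𝒜 m.2]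
    · rw [decompose_of_mem_ne 𝒜 (h𝒜 β t x m hx m.2) (by simpa using h),
        decompose_of_mem_ne 𝒜 m.2 h, lie_zero]
  | add a b ha hb =>
    rw [lie_add, decompose_add, decompose_add, DirectSum.add_apply, Submodule.coe_add,
      DirectSum.add_apply, Submodule.coe_add, ha, hb, lie_add]

lemma decompose_lie_of_mem_right (h𝒜 : IsLieGrading 𝒜) {m : Q} {t : G} (hm : m ∈ 𝒜 t)
    (γ : G) (a : Q) : (decompose 𝒜 ⁅a, m⁆ (γ * t) : Q) = ⁅(decompose 𝒜 a γ : Q), m⁆ := by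
  rw [← lie_skew, decompose_neg, DFinsupp.neg_apply, Submodule.coe_neg, mul_comm,
    h𝒜.decompose_lie_of_mem_left hm, ← lie_skew, neg_neg]

open Classical in
lemma decompose_lie (h𝒜 : IsLieGrading 𝒜) (x a : Q) (g : G) :
    (decompose 𝒜 ⁅x, a⁆ g : Q) = ∑ β ∈ (decompose 𝒜 x).support,
      ⁅(decompose 𝒜 x β : Q), (decompose 𝒜 a (β⁻¹ * g) : Q)⁆ := by
  conv_lhs => rw [← sum_support_decompose 𝒜 x, sum_lie, decompose_sum, DFinsupp.finsetSum_apply,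
    AddSubmonoidClass.coe_finsetSum]
  refine Finset.sum_congr rfl fun β _ => ?_
  rw [← h𝒜.decompose_lie_of_mem_left (decompose 𝒜 x β).2, mul_inv_cancel_left]

lemma lSpan_isHomogeneous (h𝒜 : IsLieGrading 𝒜) {L : LieSubalgebra Φ Q}
    (hL : L.toSubmodule.IsHomogeneous 𝒜) {q : Q} {τ : G} (hq : q ∈ 𝒜 τ) :
    (lSpan Φ L q).IsHomogeneous 𝒜 := by
  intro g y hy
  induction hy using Submodule.span_induction generalizing g with
  | mem z hz =>
    induction hz generalizing g with
    | base =>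
      by_cases h : τ = g
      · rw [← h, decompose_of_mem_same 𝒜 hq]; exact mem_lSpan_self L q
      · rw [decompose_of_mem_ne 𝒜 hq h]; exact Submodule.zero_mem _
    | step x hx _ ih =>
      rw [h𝒜.decompose_lie]
      exact Submodule.sum_mem _ fun β _ => isLieStable_lSpan L q _ (hL β hx) _ (ih _)
  | zero => simp
  | add a b _ _ ha hb =>
    rw [decompose_add, DirectSum.add_apply, Submodule.coe_add]
    exact Submodule.add_mem _ (ha g) (hb g)
  | smul c a _ ha =>
    rw [decompose_smul, DFinsupp.smul_apply, Submodule.coe_smul]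
    exact Submodule.smul_mem _ _ (ha g)

lemma lieColon_isHomogeneous (h𝒜 : IsLieGrading 𝒜) {L : LieSubalgebra Φ Q}
    (hL : L.toSubmodule.IsHomogeneous 𝒜) {S W : Submodule Φ Q} (hS : S.IsHomogeneous 𝒜)
    (hW : W.IsHomogeneous 𝒜) : (lieColon L S W).IsHomogeneous 𝒜 := by
  classical
  intro γ a ha
  refine ⟨hL γ ha.1, fun w hw => ?_⟩
  rw [← sum_support_decompose 𝒜 w, lie_sum]
  refine Submodule.sum_mem _ fun t _ => ?_
  rw [← h𝒜.decompose_lie_of_mem_right (decompose 𝒜 w t).2]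
  exact hS _ (ha.2 _ (hW t hw))

end IsLieGrading

variable (𝒜) (L : LieSubalgebra Φ Q)

structure IsGradedIdeal (I : Submodule Φ Q) : Prop where
  le : I ≤ L.toSubmodule
  isLieStable : IsLieStable L I
  isHomogeneous : I.IsHomogeneous 𝒜

def IsGradedSemiprime : Prop :=
  ∀ I : Submodule Φ Q, IsGradedIdeal 𝒜 L I → I ≠ ⊥ → ∃ a ∈ I, ∃ b ∈ I, ⁅a, b⁆ ≠ 0

def SeparatesHomogeneous (I : Submodule Φ Q) : Prop :=
  ∀ (σ : G) (p : Q), p ∈ 𝒜 σ → p ≠ 0 → ∃ x ∈ I, ⁅x, p⁆ ≠ 0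

variable {𝒜 L}

lemma IsGradedIdeal.inf {I J : Submodule Φ Q} (hI : IsGradedIdeal 𝒜 L I)
    (hJ : IsGradedIdeal 𝒜 L J) : IsGradedIdeal 𝒜 L (I ⊓ J) where
  le := inf_le_left.trans hI.le
  isLieStable := hI.isLieStable.inf hJ.isLieStable
  isHomogeneous g _ hx := ⟨hI.isHomogeneous g hx.1, hJ.isHomogeneous g hx.2⟩

lemma SeparatesHomogeneous.inf_ne_bot {K A : Submodule Φ Q} (hK : SeparatesHomogeneous 𝒜 K)
    (hKL : K ≤ L.toSubmodule) (hKs : IsLieStable L K) (hA : IsGradedIdeal 𝒜 L A)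
    (hA0 : A ≠ ⊥) : K ⊓ A ≠ ⊥ := by
  obtain ⟨g, a, hag, haA, ha0⟩ := hA.isHomogeneous.exists_homogeneous_ne_zero hA0
  obtain ⟨x, hxK, hxa⟩ := hK g a hag ha0
  have hxaK : ⁅x, a⁆ ∈ K := by
    rw [← lie_skew]; exact K.neg_mem (hKs a (hA.le haA) x hxK)
  exact (Submodule.ne_bot_iff _).2 ⟨_, ⟨hxaK, hA.isLieStable x (hKL hxK) a haA⟩, hxa⟩

variable [CommGroup G]

lemma IsLieGrading.isGradedIdeal_lieColon (h𝒜 : IsLieGrading 𝒜)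
    (hL : L.toSubmodule.IsHomogeneous 𝒜) {S W : Submodule Φ Q}
    (hS : IsLieStable L S) (hSh : S.IsHomogeneous 𝒜)
    (hW : IsLieStable L W) (hWh : W.IsHomogeneous 𝒜) :
    IsGradedIdeal 𝒜 L (lieColon L S W) :=
  ⟨lieColon_le, hS.lieColon hW, h𝒜.lieColon_isHomogeneous hL hSh hWh⟩

lemma IsGradedSemiprime.inf_lieColon_bot_eq_bot (hL : IsGradedSemiprime 𝒜 L)
    (h𝒜 : IsLieGrading 𝒜) (hLh : L.toSubmodule.IsHomogeneous 𝒜) {K : Submodule Φ Q}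
    (hK : IsGradedIdeal 𝒜 L K) : K ⊓ lieColon L ⊥ K = ⊥ := by
  by_contra hne
  have hN := h𝒜.isGradedIdeal_lieColon hLh (isLieStable_bot L) Submodule.isHomogeneous_bot
    hK.isLieStable hK.isHomogeneous
  obtain ⟨a, ha, b, hb, hab⟩ := hL _ (hK.inf hN) hne
  exact hab ((Submodule.mem_bot Φ).1 (ha.2.2 b hb.1))

theorem SeparatesHomogeneous.inf (hL : IsGradedSemiprime 𝒜 L) (h𝒜 : IsLieGrading 𝒜)
    (hLh : L.toSubmodule.IsHomogeneous 𝒜)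
    (hLQ : ∀ (σ : G) (u : Q), u ∈ 𝒜 σ → u ≠ 0 → ∃ x ∈ L, ⁅x, u⁆ ∈ L ∧ ⁅x, u⁆ ≠ 0)
    {I J : Submodule Φ Q} (hI : IsGradedIdeal 𝒜 L I) (hJ : IsGradedIdeal 𝒜 L J)
    (hIs : SeparatesHomogeneous 𝒜 I) (hJs : SeparatesHomogeneous 𝒜 J) :
    SeparatesHomogeneous 𝒜 (I ⊓ J) := by
  intro σ u hu hu0
  by_contra! hIJu
  obtain ⟨x, hx, hxu, hxu0⟩ := hLQ σ u hu hu0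
  have hIJ := hI.inf hJ
  have hN := h𝒜.isGradedIdeal_lieColon hLh (isLieStable_bot L) Submodule.isHomogeneous_bot
    hIJ.isLieStable hIJ.isHomogeneous
  have hIN := hIs.inf_ne_bot hI.le hI.isLieStable hN
    (lieColon_bot_ne_bot hIJ.isLieStable hIJu hx hxu hxu0)
  apply hJs.inf_ne_bot hJ.le hJ.isLieStable (hI.inf hN) hIN
  rw [← inf_assoc, inf_comm J I]
  exact hL.inf_lieColon_bot_eq_bot h𝒜 hLh hIJ

theorem isGradedIdeal_separatesHomogeneous_inf_finsetInf (hL : IsGradedSemiprime 𝒜 L)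
    (h𝒜 : IsLieGrading 𝒜) (hLh : L.toSubmodule.IsHomogeneous 𝒜)
    (hLQ : ∀ (σ : G) (u : Q), u ∈ 𝒜 σ → u ≠ 0 → ∃ x ∈ L, ⁅x, u⁆ ∈ L ∧ ⁅x, u⁆ ≠ 0)
    {ι : Type*} [DecidableEq ι] (s : Finset ι) {D : ι → Submodule Φ Q}
    (hD : ∀ i, IsGradedIdeal 𝒜 L (D i)) (hDs : ∀ i, SeparatesHomogeneous 𝒜 (D i)) :
    IsGradedIdeal 𝒜 L (L.toSubmodule ⊓ s.inf D) ∧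
      SeparatesHomogeneous 𝒜 (L.toSubmodule ⊓ s.inf D) := by
  induction s using Finset.induction_on with
  | empty =>
    rw [Finset.inf_empty, inf_top_eq]
    refine ⟨⟨le_rfl, isLieStable_self L, hLh⟩, fun σ u hu hu0 => ?_⟩
    obtain ⟨x, hx, -, hxu⟩ := hLQ σ u hu hu0
    exact ⟨x, hx, hxu⟩
  | insert i s _ ih =>
    rw [Finset.inf_insert, inf_left_comm]
    exact ⟨(hD i).inf ih.1, (hDs i).inf hL h𝒜 hLh hLQ (hD i) ih.1 ih.2⟩

end Graded

/-- Let `Q = ⊕_{σ∈G} Q_σ` be a graded algebra of quotients of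
a graded semiprime `G`-graded Lie algebra `L`.  Given a nonzero homogeneous
`p_σ ∈ Q_σ` and homogeneous `q_{τ_1} ∈ Q_{τ_1}, …, q_{τ_n} ∈ Q_{τ_n}`, there
exist `α ∈ G` and `x_α ∈ L_α` with `⁅x_α, p_σ⁆ ≠ 0` and
`⁅x_α, _L(q_{τ_i})⁆ ⊆ L` for every `i`. -/
theorem common_denominator_property
    {Φ : Type*} [CommRing Φ] {G : Type*} [CommGroup G] [DecidableEq G]
    {Q : Type*} [LieRing Q] [LieAlgebra Φ Q]
    (𝒜 : G → Submodule Φ Q) [DirectSum.Decomposition 𝒜]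
    (hbracket : ∀ (σ τ : G) (x y : Q), x ∈ 𝒜 σ → y ∈ 𝒜 τ → ⁅x, y⁆ ∈ 𝒜 (σ * τ))
    (L : LieSubalgebra Φ Q)
    (hLgr : ∀ x ∈ L, ∀ σ : G, (DirectSum.decompose 𝒜 x σ : Q) ∈ L)
    -- `L` is graded semiprime:
    (hsemiprime : ∀ I : Submodule Φ Q, I ≤ L.toSubmodule →
      (∀ x ∈ L, ∀ y ∈ I, ⁅x, y⁆ ∈ I) →
      (∀ y ∈ I, ∀ σ : G, (DirectSum.decompose 𝒜 y σ : Q) ∈ I) →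
      I ≠ ⊥ → ∃ a ∈ I, ∃ b ∈ I, ⁅a, b⁆ ≠ 0)
    -- `Q` is a graded algebra of quotients of `L`:
    (hquot : ∀ (σ τ : G) (p q : Q), p ∈ 𝒜 σ → p ≠ 0 → q ∈ 𝒜 τ →
      ∃ (α : G) (x : Q), x ∈ 𝒜 α ∧ x ∈ L ∧ ⁅x, p⁆ ≠ 0 ∧
        ∀ y ∈ lSpan Φ L q, ⁅x, y⁆ ∈ L)
    (σ : G) (p : Q) (hp : p ∈ 𝒜 σ) (hp0 : p ≠ 0)
    (n : ℕ) (τ : Fin n → G) (q : Fin n → Q) (hq : ∀ i, q i ∈ 𝒜 (τ i)) :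
    ∃ (α : G) (x : Q), x ∈ 𝒜 α ∧ x ∈ L ∧ ⁅x, p⁆ ≠ 0 ∧
      ∀ i : Fin n, ∀ y ∈ lSpan Φ L (q i), ⁅x, y⁆ ∈ L := by
  have hLh : L.toSubmodule.IsHomogeneous 𝒜 := fun g x hx => hLgr x hx g
  have hsemi : IsGradedSemiprime 𝒜 L := fun I hI =>
    hsemiprime I hI.le hI.isLieStable fun y hy g => hI.isHomogeneous g hy
  have hLQ : ∀ (σ : G) (u : Q), u ∈ 𝒜 σ → u ≠ 0 → ∃ x ∈ L, ⁅x, u⁆ ∈ L ∧ ⁅x, u⁆ ≠ 0 := by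
    intro σ u hu hu0
    obtain ⟨-, x, -, hx, hxu, hxL⟩ := hquot σ σ u u hu hu0 hu
    exact ⟨x, hx, hxL u (mem_lSpan_self L u), hxu⟩
  let D i := lieColon L L.toSubmodule (lSpan Φ L (q i))
  have hD i : IsGradedIdeal 𝒜 L (D i) :=
    IsLieGrading.isGradedIdeal_lieColon hbracket hLh (isLieStable_self L) hLh
      (isLieStable_lSpan L (q i)) (IsLieGrading.lSpan_isHomogeneous hbracket hLh (hq i))
  have hDs i : SeparatesHomogeneous 𝒜 (D i) := by
    intro σ' p' hp' hp0'
    obtain ⟨-, x, -, hx, hxp, hxL⟩ := hquot σ' (τ i) p' (q i) hp' hp0' (hq i)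
    exact ⟨x, ⟨hx, hxL⟩, hxp⟩
  obtain ⟨hI, hIs⟩ :=
    isGradedIdeal_separatesHomogeneous_inf_finsetInf hsemi hbracket hLh hLQ Finset.univ hD hDs
  obtain ⟨x, hx, hxp⟩ := hIs σ p hp hp0
  obtain ⟨α, y, hyα, hy, hyp⟩ := exists_homogeneous_lie_ne_zero hI.isHomogeneous hx hxp
  exact ⟨α, y, hyα, hy.1, hyp, fun i => (Finset.inf_le (f := D) (Finset.mem_univ i) hy.2).2⟩
end
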